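/- arXiv:1410.3777 — 2 statements merged into one kernel-verified Lean document; each statement's English description precedes it below -/
import Mathlib

section
/- For every real number x ≥ 2, the limit as σ → 1⁺ of ( log ζ(σ) + ∫_σ^∞ x^{1−α}/(1−α) dα ) exists and equals log log x + γ. -/
/-!
The substitution `t = (α - 1) log x` turns the integral into `-E₁((σ - 1) log x)`, where
`E₁(s) = ∫_s^∞ e^{-t}/t dt`. Integrating by parts,
`E₁(s) = ∫_s^∞ e^{-t} log t dt - e^{-s} log s`, and as `s → 0⁺` the integral tends to
`∫_0^∞ e^{-t} log t dt = Γ'(1) = -γ`, so `E₁(s) = -log s - γ + o(1)`. Since also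
`log ζ(σ) = -log (σ - 1) + o(1)`, the two logarithms of `σ - 1` cancel and
`log log x + γ` remains.
-/

open Filter MeasureTheory Real Set
open scoped Topology

noncomputable def expIntegralE₁ (s : ℝ) : ℝ := ∫ t in Ioi s, exp (-t) / t

lemma abs_log_le_add_two_mul_rpow_neg_half {t : ℝ} (ht : 0 < t) :
    |log t| ≤ t + 2 * t ^ (-(1 / 2 : ℝ)) := by
  have h_rpow : 0 < t ^ (-(1 / 2 : ℝ)) := rpow_pos_of_pos ht _
  rcases le_or_gt 1 t with h1 | h1
  · rw [abs_of_nonneg (log_nonneg h1)]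
    linarith [log_le_sub_one_of_pos ht]
  · rw [abs_of_nonpos (log_nonpos ht.le h1.le)]
    have := log_le_sub_one_of_pos h_rpow
    rw [log_rpow ht] at this
    linarith

lemma integrableOn_exp_neg_mul_log : IntegrableOn (fun t => exp (-t) * log t) (Ioi 0) := by
  have h_dom : IntegrableOn
      (fun t : ℝ => exp (-t) * t ^ ((2 : ℝ) - 1) + 2 * (exp (-t) * t ^ ((1 / 2 : ℝ) - 1)))
      (Ioi 0) :=
    (GammaIntegral_convergent two_pos).add ((GammaIntegral_convergent one_half_pos).const_mul 2)
  refine h_dom.mono' (by fun_prop) ?_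
  filter_upwards [ae_restrict_mem measurableSet_Ioi] with t (ht : 0 < t)
  have h_exp : 0 < exp (-t) := exp_pos _
  calc ‖exp (-t) * log t‖ = exp (-t) * |log t| := by
        rw [norm_mul, norm_of_nonneg h_exp.le, norm_eq_abs]
    _ ≤ exp (-t) * (t + 2 * t ^ (-(1 / 2 : ℝ))) :=
        mul_le_mul_of_nonneg_left (abs_log_le_add_two_mul_rpow_neg_half ht) h_exp.le
    _ = _ := by norm_num; ring

lemma integral_exp_neg_mul_log :
    ∫ t in Ioi (0 : ℝ), exp (-t) * log t = -eulerMascheroniConstant := by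
  set I := ∫ t in Ioi (0 : ℝ), exp (-t) * log t with hI
  have h_integral : HasDerivAt Complex.GammaIntegral (I : ℂ) 1 := by
    convert Complex.hasDerivAt_GammaIntegral (s := 1) one_pos using 1
    rw [hI, ← integral_complex_ofReal]
    refine setIntegral_congr_fun measurableSet_Ioi fun t _ => ?_
    push_cast
    simp [mul_comm]
  have h_Gamma : HasDerivAt Complex.Gamma (I : ℂ) ((1 : ℝ) : ℂ) := by
    refine h_integral.congr_of_eventuallyEq ?_
    filter_upwards [(isOpen_lt continuous_const Complex.continuous_re).mem_nhds
      (by simp : (0 : ℝ) < (1 : ℂ).re)] with s hs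
    exact Complex.Gamma_eq_integral hs
  have h_real := h_Gamma.real_of_complex
  simp only [Complex.Gamma_ofReal, Complex.ofReal_re] at h_real
  exact h_real.unique hasDerivAt_Gamma_one

lemma integrableOn_exp_neg_div {s : ℝ} (hs : 0 < s) :
    IntegrableOn (fun t => exp (-t) / t) (Ioi s) := by
  refine ((exp_neg_integrableOn_Ioi s one_pos).const_mul s⁻¹).mono'
    (by fun_prop : Measurable fun t : ℝ => exp (-t) / t).aestronglyMeasurable ?_
  filter_upwards [ae_restrict_mem measurableSet_Ioi] with t (ht : s < t)
  have ht0 : 0 < t := hs.trans ht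
  rw [norm_of_nonneg (by positivity), neg_one_mul, div_eq_inv_mul]
  gcongr

lemma tendsto_exp_neg_mul_log_atTop : Tendsto (fun t => exp (-t) * log t) atTop (𝓝 0) := by
  refine squeeze_zero_norm' ?_ (by simpa using tendsto_pow_mul_exp_neg_atTop_nhds_zero 1)
  filter_upwards [eventually_ge_atTop 1] with t ht
  rw [norm_mul, norm_of_nonneg (exp_pos _).le, norm_of_nonneg (log_nonneg ht), mul_comm]
  gcongr
  exact log_le_self (by linarith)

lemma expIntegralE₁_eq {s : ℝ} (hs : 0 < s) :
    expIntegralE₁ s = (∫ t in Ioi s, exp (-t) * log t) - exp (-s) * log s := by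
  have h_parts := integral_Ioi_mul_deriv_eq_deriv_mul (a := s) (u := fun t => exp (-t))
    (v := log) (u' := fun t => -exp (-t)) (v' := fun t => t⁻¹) (a' := exp (-s) * log s) (b' := 0)
    (fun t _ => by simpa using (hasDerivAt_neg t).exp)
    (fun t ht => hasDerivAt_log (hs.trans ht).ne')
    (by simpa only [Pi.mul_def, div_eq_mul_inv] using integrableOn_exp_neg_div hs)
    (by simpa only [Pi.mul_def, Pi.neg_def, neg_mul] using
      (integrableOn_exp_neg_mul_log.mono_set (Ioi_subset_Ioi hs.le)).neg)
    ((by fun_prop (disch := positivity) : ContinuousAt (fun t => exp (-t) * log t) s).tendsto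
      |>.mono_left nhdsWithin_le_nhds)
    tendsto_exp_neg_mul_log_atTop
  simp only [← div_eq_mul_inv, neg_mul, integral_neg, sub_neg_eq_add, zero_sub] at h_parts
  rw [expIntegralE₁, h_parts]
  ring

lemma tendsto_one_sub_exp_neg_mul_log :
    Tendsto (fun s => (1 - exp (-s)) * log s) (𝓝[>] 0) (𝓝 0) := by
  refine squeeze_zero_norm' ?_ (by simpa using tendsto_log_mul_rpow_nhdsGT_zero one_pos |>.norm)
  filter_upwards [self_mem_nhdsWithin] with s (hs : 0 < s)
  have h_lower : 0 ≤ 1 - exp (-s) := by simpa using exp_le_one_iff.mpr (neg_nonpos.mpr hs.le)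
  have h_upper : 1 - exp (-s) ≤ s := by linarith [add_one_le_exp (-s)]
  rw [norm_mul, norm_of_nonneg h_lower, norm_eq_abs, abs_of_pos hs, mul_comm]
  gcongr

lemma tendsto_expIntegralE₁_add_log :
    Tendsto (fun s => expIntegralE₁ s + log s) (𝓝[>] 0) (𝓝 (-eulerMascheroniConstant)) := by
  have h_tail : Tendsto (fun s => ∫ t in Ioi s, exp (-t) * log t) (𝓝[>] 0)
      (𝓝 (-eulerMascheroniConstant)) := by
    rw [← integral_exp_neg_mul_log]
    exact integrableOn_exp_neg_mul_log.continuousWithinAt_Ici_primitive_Ioi.mono Ioi_subset_Ici_self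
  have h_sum := h_tail.add tendsto_one_sub_exp_neg_mul_log
  rw [add_zero] at h_sum
  refine h_sum.congr' ?_
  filter_upwards [self_mem_nhdsWithin] with s (hs : 0 < s)
  rw [expIntegralE₁_eq hs]
  ring

lemma setIntegral_Ioi_comp_sub_right {E : Type*} [NormedAddCommGroup E] [NormedSpace ℝ E]
    (f : ℝ → E) (a c : ℝ) : ∫ u in Ioi a, f (u - c) = ∫ u in Ioi (a - c), f u := by
  have := (measurePreserving_sub_right volume c).setIntegral_preimage_emb
    (measurableEmbedding_subRight c) f (Ioi (a - c))
  rwa [preimage_sub_const_Ioi, sub_add_cancel] at this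

lemma integral_Ioi_rpow_one_sub_div_one_sub {x : ℝ} (hx : 1 < x) (σ : ℝ) :
    ∫ α in Ioi σ, x ^ (1 - α) / (1 - α) = -expIntegralE₁ ((σ - 1) * log x) := by
  set L := log x with hL_def
  have hL : 0 < L := log_pos hx
  let g : ℝ → ℝ := fun v => -L * (exp (-v) / v)
  have h_integrand (α : ℝ) : x ^ (1 - α) / (1 - α) = g (L * α - L) := by
    rcases eq_or_ne α 1 with rfl | hα
    · simp [g]
    · rw [rpow_def_of_pos (by linarith), ← hL_def]
      simp only [g]
      field_simp [sub_ne_zero.mpr hα.symm]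
      ring_nf
  calc ∫ α in Ioi σ, x ^ (1 - α) / (1 - α)
      = ∫ α in Ioi σ, (fun u => g (u - L)) (L * α) := by simp_rw [h_integrand]
    _ = L⁻¹ • ∫ u in Ioi (L * σ), g (u - L) :=
        integral_comp_mul_left_Ioi (fun u => g (u - L)) σ hL
    _ = L⁻¹ • ∫ v in Ioi (L * σ - L), g v := by rw [setIntegral_Ioi_comp_sub_right]
    _ = -expIntegralE₁ ((σ - 1) * L) := by
        rw [integral_const_mul, smul_eq_mul, expIntegralE₁, show L * σ - L = (σ - 1) * L by ring]
        field_simp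

/-- For `x ≥ 2`, `lim_{σ→1⁺} ( log ζ(σ) + ∫_σ^∞ x^{1-α}/(1-α) dα ) = log log x + γ`.
(For real `σ > 1`, `ζ(σ)` is real and positive, so `log ζ(σ)` is `Real.log` of its
real part.) -/
theorem tendsto_log_zeta_add_integral (x : ℝ) (hx : 2 ≤ x) :
    Tendsto
      (fun σ : ℝ => Real.log (riemannZeta (σ : ℂ)).re +
        ∫ α in Set.Ioi σ, x ^ (1 - α) / (1 - α))
      (nhdsWithin 1 (Set.Ioi 1))
      (nhds (Real.log (Real.log x) + Real.eulerMascheroniConstant)) := by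
  have hL : 0 < log x := log_pos (by linarith)
  have h_zeta : Tendsto (fun σ : ℝ => log (riemannZeta σ).re + log (σ - 1)) (𝓝[>] 1) (𝓝 0) :=
    log_riemannZeta_add_log_sub_isBigO_ofReal.trans_tendsto <|
      tendsto_sub_nhds_zero_iff.mpr nhdsWithin_le_nhds
  have h_arg : Tendsto (fun σ : ℝ => (σ - 1) * log x) (𝓝[>] 1) (𝓝[>] 0) := by
    refine tendsto_nhdsWithin_iff.mpr ⟨?_, ?_⟩
    · exact (by fun_prop : Continuous fun σ : ℝ => (σ - 1) * log x).tendsto' 1 0 (by simp)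
        |>.mono_left nhdsWithin_le_nhds
    · filter_upwards [self_mem_nhdsWithin] with σ (hσ : 1 < σ)
      exact mul_pos (sub_pos.mpr hσ) hL
  have h_E₁ := tendsto_expIntegralE₁_add_log.comp h_arg
  have h_lim := (h_zeta.sub h_E₁).const_add (log (log x))
  rw [zero_sub, neg_neg] at h_lim
  refine h_lim.congr' ?_
  filter_upwards [self_mem_nhdsWithin] with σ (hσ : 1 < σ)
  rw [Function.comp_apply, integral_Ioi_rpow_one_sub_div_one_sub (by linarith),
    log_mul (sub_pos.mpr hσ).ne' hL.ne']
  ring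
end

section
/- There is an absolute constant C > 0 such that for every real x ≥ 2 and every complex number ρ with 0 < Re(ρ) < 1 and Im(ρ) ≠ 0, | ∫_1^∞ x^{−α}/(ρ−α) dα − 1/(x (log x)(ρ−1)) | ≤ C/( x (log x)² Im(ρ)² ). -/
/-!
Since `1 / (ρ - α) - 1 / (ρ - 1) = (α - 1) / ((ρ - α) (ρ - 1))` and both factors of the denominator
have modulus at least `|Im ρ|`, the integral differs from `(ρ - 1)⁻¹ ∫_1^∞ x^{-α} dα = 1 / (x log x (ρ - 1))`
by at most `(Im ρ)⁻² ∫_1^∞ (α - 1) x^{-α} dα = 1 / (x (log x)² (Im ρ)²)`; so `C = 1` works.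
-/

open Filter MeasureTheory Real Set Topology

section ExpDecay

variable {L : ℝ}

lemma tendsto_exp_neg_mul_mul_affine (hL : 0 < L) (c d : ℝ) :
    Tendsto (fun α => exp (-(L * α)) * (c * α + d)) atTop (𝓝 0) := by
  have hLα : Tendsto (fun α => L * α) atTop atTop := tendsto_id.const_mul_atTop hL
  have h₁ := (tendsto_pow_mul_exp_neg_atTop_nhds_zero 1).comp hLα
  have h₂ := tendsto_exp_neg_atTop_nhds_zero.comp hLα
  simpa using ((h₁.const_mul (c / L)).add (h₂.const_mul d)).congr fun α => by
    simp only [Function.comp, pow_one]; field_simp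

lemma integrableOn_exp_neg_mul_Ioi (hL : 0 < L) (a : ℝ) :
    IntegrableOn (fun α => exp (-(L * α))) (Ioi a) := by
  simpa only [neg_mul] using exp_neg_integrableOn_Ioi a hL

lemma integral_exp_neg_mul_Ioi (hL : 0 < L) (a : ℝ) :
    ∫ α in Ioi a, exp (-(L * α)) = exp (-(L * a)) / L := by
  simpa only [neg_mul, neg_div_neg_eq] using integral_exp_mul_Ioi (neg_lt_zero.2 hL) a

lemma hasDerivAt_exp_neg_mul_mul_sub_antideriv (hL : 0 < L) (a α : ℝ) :
    HasDerivAt (fun β => -exp (-(L * β)) * ((β - a) / L + 1 / L ^ 2))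
      (exp (-(L * α)) * (α - a)) α := by
  have hexp : HasDerivAt (fun β => exp (-(L * β))) (exp (-(L * α)) * -L) α := by
    simpa using ((hasDerivAt_id α).const_mul L).neg.exp
  refine (hexp.fun_neg.fun_mul
    ((((hasDerivAt_id α).sub_const a).div_const L).add_const (1 / L ^ 2))).congr_deriv ?_
  simp only [id]
  field_simp
  ring

lemma tendsto_exp_neg_mul_mul_sub_antideriv (hL : 0 < L) (a : ℝ) :
    Tendsto (fun β => -exp (-(L * β)) * ((β - a) / L + 1 / L ^ 2)) atTop (𝓝 0) :=
  (tendsto_exp_neg_mul_mul_affine hL (-1 / L) (a / L - 1 / L ^ 2)).congr fun β => by ring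

lemma integrableOn_exp_neg_mul_mul_sub_Ioi (hL : 0 < L) (a : ℝ) :
    IntegrableOn (fun α => exp (-(L * α)) * (α - a)) (Ioi a) :=
  integrableOn_Ioi_deriv_of_nonneg' (fun α _ => hasDerivAt_exp_neg_mul_mul_sub_antideriv hL a α)
    (fun _ hα => mul_nonneg (exp_pos _).le (sub_nonneg.2 (le_of_lt hα)))
    (tendsto_exp_neg_mul_mul_sub_antideriv hL a)

lemma integral_exp_neg_mul_mul_sub_Ioi (hL : 0 < L) (a : ℝ) :
    ∫ α in Ioi a, exp (-(L * α)) * (α - a) = exp (-(L * a)) / L ^ 2 := by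
  rw [integral_Ioi_of_hasDerivAt_of_tendsto'
    (fun α _ => hasDerivAt_exp_neg_mul_mul_sub_antideriv hL a α)
    (integrableOn_exp_neg_mul_mul_sub_Ioi hL a) (tendsto_exp_neg_mul_mul_sub_antideriv hL a)]
  ring

end ExpDecay

namespace Complex

variable {ρ : ℂ}

lemma abs_im_le_norm_sub_ofReal (ρ : ℂ) (α : ℝ) : |ρ.im| ≤ ‖ρ - α‖ := by
  simpa using abs_im_le_norm (ρ - α)

lemma sub_ofReal_ne_zero (hρ : ρ.im ≠ 0) (α : ℝ) : ρ - α ≠ 0 :=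
  fun h => hρ (by simpa using congrArg im h)

lemma norm_inv_sub_ofReal_le (hρ : ρ.im ≠ 0) (α : ℝ) : ‖(ρ - α)⁻¹‖ ≤ |ρ.im|⁻¹ := by
  rw [norm_inv]
  exact inv_anti₀ (abs_pos.2 hρ) (abs_im_le_norm_sub_ofReal ρ α)

lemma norm_inv_sub_ofReal_mul_sub_ofReal_le (hρ : ρ.im ≠ 0) (α β : ℝ) :
    ‖((ρ - α) * (ρ - β))⁻¹‖ ≤ (ρ.im ^ 2)⁻¹ := by
  rw [mul_inv, norm_mul, ← sq_abs, sq, mul_inv]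
  exact mul_le_mul (norm_inv_sub_ofReal_le hρ α) (norm_inv_sub_ofReal_le hρ β) (norm_nonneg _)
    (inv_nonneg.2 (abs_nonneg _))

theorem norm_setIntegral_div_sub_ofReal_sub_le {f : ℝ → ℝ} {a : ℝ} (hρ : ρ.im ≠ 0) (hf : 0 ≤ f)
    (hfi : IntegrableOn f (Ioi a)) (hfi' : IntegrableOn (fun α => f α * (α - a)) (Ioi a)) :
    ‖(∫ α in Ioi a, (f α : ℂ) / (ρ - α)) - (∫ α in Ioi a, f α) / (ρ - a)‖ ≤
      (∫ α in Ioi a, f α * (α - a)) / ρ.im ^ 2 := by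
  have hdiv : IntegrableOn (fun α => (f α : ℂ) / (ρ - α)) (Ioi a) := by
    simp_rw [div_eq_mul_inv]
    exact hfi.ofReal.mul_bdd
      ((continuous_const.sub continuous_ofReal).inv₀ (sub_ofReal_ne_zero hρ)).aestronglyMeasurable
      (ae_of_all _ (norm_inv_sub_ofReal_le hρ))
  have hdiff : (∫ α in Ioi a, (f α : ℂ) / (ρ - α)) - (∫ α in Ioi a, f α) / (ρ - a) =
      ∫ α in Ioi a, (f α * (α - a) : ℝ) * ((ρ - α) * (ρ - a))⁻¹ := by
    have hconst : IntegrableOn (fun α => (f α : ℂ) / (ρ - a)) (Ioi a) := hfi.ofReal.div_const _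
    rw [← integral_complex_ofReal, ← integral_div, ← integral_sub hdiv hconst]
    refine integral_congr_ae (ae_of_all _ fun α => ?_)
    have := sub_ofReal_ne_zero hρ α
    have := sub_ofReal_ne_zero hρ a
    push_cast
    field_simp
    ring
  rw [hdiff, ← integral_div]
  refine norm_integral_le_of_norm_le (hfi'.div_const _) ?_
  filter_upwards [ae_restrict_mem measurableSet_Ioi] with α (hα : a < α)
  rw [norm_mul, norm_real, norm_of_nonneg (mul_nonneg (hf α) (sub_nonneg.2 hα.le)), div_eq_mul_inv]
  exact mul_le_mul_of_nonneg_left (norm_inv_sub_ofReal_mul_sub_ofReal_le hρ α a)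
    (mul_nonneg (hf α) (sub_nonneg.2 hα.le))

end Complex

/-- For `x ≥ 2` and a complex `ρ` with `0 < Re ρ < 1` and `Im ρ ≠ 0`,
`∫_1^∞ x^{-α}/(ρ-α) dα = 1/(x (log x)(ρ-1)) + O(1/(x (log x)² (Im ρ)²))`. -/
theorem integral_rpow_div_sub_approx :
    ∃ C : ℝ, 0 < C ∧ ∀ (x : ℝ) (ρ : ℂ), 2 ≤ x → 0 < ρ.re → ρ.re < 1 → ρ.im ≠ 0 →
      ‖(∫ α in Set.Ioi (1 : ℝ), ((x ^ (-α) : ℝ) : ℂ) / (ρ - (α : ℂ))) -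
            1 / (x * Real.log x * (ρ - 1))‖ ≤
        C / (x * (Real.log x) ^ 2 * ρ.im ^ 2) := by
  refine ⟨1, one_pos, fun x ρ hx _ _ hρ => ?_⟩
  have hx₀ : 0 < x := by linarith
  have hlog : 0 < log x := log_pos (by linarith)
  have hpow : ∀ α : ℝ, x ^ (-α) = exp (-(log x * α)) := fun α => by
    rw [rpow_def_of_pos hx₀, mul_neg]
  have hbound := Complex.norm_setIntegral_div_sub_ofReal_sub_le hρ (fun α => (exp_pos _).le)
    (integrableOn_exp_neg_mul_Ioi hlog 1) (integrableOn_exp_neg_mul_mul_sub_Ioi hlog 1)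
  rw [integral_exp_neg_mul_Ioi hlog, integral_exp_neg_mul_mul_sub_Ioi hlog, mul_one, exp_neg,
    exp_log hx₀] at hbound
  have hmain : ((x⁻¹ / log x : ℝ) : ℂ) / (ρ - (1 : ℝ)) = 1 / (x * log x * (ρ - 1)) := by
    push_cast; field_simp
  have herror : x⁻¹ / log x ^ 2 / ρ.im ^ 2 = 1 / (x * log x ^ 2 * ρ.im ^ 2) := by
    field_simp
  simpa only [hpow, hmain, herror] using hbound
end
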